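/- arXiv:1003.0275 — 3 statements merged into one kernel-verified Lean document; each statement's English description precedes it below -/
import Mathlib

section
/- For the tempered stable density ν(x) = (2^γ γ/Γ(1-γ)) x^{-(γ+1)} e^{-x/2} 1_{x>0} with γ ∈ (0,1), the Fourier transform of x²ν(x) satisfies F[x²ν](u) ~ 2^γ γ(1-γ) e^{iπ(1-γ/2)} u^{-2+γ} as u → +∞. In particular, ∫ (1+|u|^β)|F[x²ν](u)| du = ∞ whenever β > 1-γ. -/
/-!
Up to the factor `4γ(1-γ)`, `x²ν` is the density of the Gamma distribution with shape `2 - γ`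
and rate `1/2`, so its Fourier transform is the closed form `4γ(1-γ) (1 - 2iu)^(γ-2)`. That
characteristic function comes from the real moment generating function `(1 - t/r)^(-a)` by
analytic continuation of the complex one. Factoring `1 - 2iu = 2u ((2u)⁻¹ - i)` gives the
asymptotics, with `(-i)^(γ-2) = e^{iπ(1-γ/2)}`; then `|F u| ≍ u^(γ-2)`, and `u^(β+γ-2)` is
not integrable at infinity when `β + γ - 2 ≥ -1`.
-/

open MeasureTheory ProbabilityTheory Real Filter Set Topology Asymptotics

namespace ProbabilityTheory

variable {a r : ℝ}

lemma measurable_gammaPDF (a r : ℝ) : Measurable (gammaPDF a r) :=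
  (measurable_gammaPDFReal a r).ennreal_ofReal

lemma integral_gammaMeasure {E : Type*} [NormedAddCommGroup E] [NormedSpace ℝ E]
    (ha : 0 < a) (hr : 0 < r) (g : ℝ → E) :
    ∫ x, g x ∂gammaMeasure a r = ∫ x, gammaPDFReal a r x • g x := by
  rw [gammaMeasure, integral_withDensity_eq_integral_toReal_smul (measurable_gammaPDF a r)
    (ae_of_all _ fun _ => ENNReal.ofReal_lt_top)]
  simp_rw [gammaPDF, ENNReal.toReal_ofReal (gammaPDFReal_nonneg ha hr _)]

lemma integrable_gammaMeasure_iff {E : Type*} [NormedAddCommGroup E] [NormedSpace ℝ E]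
    (ha : 0 < a) (hr : 0 < r) {g : ℝ → E} :
    Integrable g (gammaMeasure a r) ↔ Integrable (fun x => gammaPDFReal a r x • g x) := by
  rw [gammaMeasure, integrable_withDensity_iff_integrable_smul' (measurable_gammaPDF a r)
    (ae_of_all _ fun _ => ENNReal.ofReal_lt_top)]
  simp_rw [gammaPDF, ENNReal.toReal_ofReal (gammaPDFReal_nonneg ha hr _)]

lemma gammaPDFReal_mul_exp (a r t : ℝ) :
    (fun x => gammaPDFReal a r x * exp (t * x)) =
      (Ici 0).indicator fun x => r ^ a / Gamma a * (x ^ (a - 1) * exp (-((r - t) * x))) := by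
  ext x
  by_cases hx : 0 ≤ x
  · rw [gammaPDFReal, if_pos hx, indicator_of_mem (mem_Ici.mpr hx), mul_assoc, mul_assoc,
      ← exp_add]
    ring_nf
  · rw [gammaPDFReal, if_neg hx, indicator_of_notMem (by simpa using hx), zero_mul]

lemma integrable_exp_mul_gammaMeasure (ha : 0 < a) (hr : 0 < r) {t : ℝ} (ht : t < r) :
    Integrable (fun x => exp (t * x)) (gammaMeasure a r) := by
  rw [integrable_gammaMeasure_iff ha hr]
  simp only [smul_eq_mul]
  rw [gammaPDFReal_mul_exp, integrable_indicator_iff measurableSet_Ici,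
    integrableOn_Ici_iff_integrableOn_Ioi]
  have h := integrableOn_rpow_mul_exp_neg_mul_rpow (s := a - 1) (p := 1) (by linarith) one_pos
    (sub_pos.mpr ht)
  simp only [rpow_one, neg_mul] at h
  exact h.const_mul _

lemma mgf_id_gammaMeasure (ha : 0 < a) (hr : 0 < r) {t : ℝ} (ht : t < r) :
    mgf id (gammaMeasure a r) t = (1 - t / r) ^ (-a) := by
  rw [mgf, integral_gammaMeasure ha hr]
  simp_rw [id, smul_eq_mul, gammaPDFReal_mul_exp]
  rw [integral_indicator measurableSet_Ici, integral_Ici_eq_integral_Ioi, integral_const_mul,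
    integral_rpow_mul_exp_neg_mul_Ioi ha (sub_pos.mpr ht)]
  rw [show 1 - t / r = (r - t) / r by field_simp, rpow_neg (by bound), div_rpow (by bound) hr.le,
    one_div, inv_rpow (by bound)]
  field_simp

lemma complexMGF_id_gammaMeasure (ha : 0 < a) (hr : 0 < r) {z : ℂ} (hz : z.re < r) :
    complexMGF id (gammaMeasure a r) z = (1 - z / r) ^ (-(a : ℂ)) := by
  have hU : IsOpen {z : ℂ | z.re < r} := isOpen_lt Complex.continuous_re continuous_const
  have hslit {z : ℂ} (hz : z.re < r) : 1 - z / r ∈ Complex.slitPlane := by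
    refine Complex.mem_slitPlane_iff.mpr (Or.inl ?_)
    rw [Complex.sub_re, Complex.one_re, Complex.div_ofReal_re, sub_pos, div_lt_one hr]
    exact hz
  have hmgf : AnalyticOnNhd ℂ (complexMGF id (gammaMeasure a r)) {z | z.re < r} :=
    analyticOnNhd_complexMGF.mono fun z hz =>
      interior_maximal (fun t ht => integrable_exp_mul_gammaMeasure ha hr ht) isOpen_Iio hz
  have hpow : AnalyticOnNhd ℂ (fun z : ℂ => (1 - z / r) ^ (-(a : ℂ))) {z | z.re < r} :=
    DifferentiableOn.analyticOnNhd (fun z hz => by fun_prop (disch := exact hslit hz)) hU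
  refine hmgf.eqOn_of_preconnected_of_frequently_eq hpow (convex_halfSpace_re_lt r).isPreconnected
    (z₀ := 0) (by simpa using hr) ?_ hz
  have hreal : Tendsto ((↑) : ℝ → ℂ) (𝓝[≠] 0) (𝓝[≠] 0) :=
    tendsto_nhdsWithin_iff.mpr ⟨tendsto_nhdsWithin_of_tendsto_nhds
      Complex.continuous_ofReal.continuousAt,
      eventually_nhdsWithin_of_forall fun t ht => by simpa using ht⟩
  refine hreal.frequently (Eventually.frequently ?_)
  filter_upwards [nhdsWithin_le_nhds (eventually_lt_nhds hr)] with t ht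
  rw [complexMGF_ofReal, mgf_id_gammaMeasure ha hr ht, Complex.ofReal_cpow (by bound)]
  push_cast
  rfl

lemma charFun_gammaMeasure (ha : 0 < a) (hr : 0 < r) (t : ℝ) :
    charFun (gammaMeasure a r) t = (1 - t * Complex.I / r) ^ (-(a : ℂ)) := by
  rw [← complexMGF_id_mul_I, complexMGF_id_gammaMeasure ha hr (by simpa using hr)]

end ProbabilityTheory

namespace Complex

lemma ofReal_mul_cpow {x : ℝ} (hx : 0 < x) {z : ℂ} (hz : z ≠ 0) (s : ℂ) :
    ((x : ℂ) * z) ^ s = (x : ℂ) ^ s * z ^ s := by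
  rw [cpow_def_of_ne_zero (mul_ne_zero (ofReal_ne_zero.mpr hx.ne') hz),
    cpow_def_of_ne_zero (ofReal_ne_zero.mpr hx.ne'), cpow_def_of_ne_zero hz,
    log_ofReal_mul hx hz, ofReal_log hx.le, add_mul, exp_add]

lemma tendsto_one_sub_mul_I_cpow_div_cpow (s : ℂ) :
    Tendsto (fun u : ℝ => (1 - u * I) ^ s / (u : ℂ) ^ s) atTop (𝓝 ((-I) ^ s)) := by
  have hinv : Tendsto (fun u : ℝ => (u : ℂ)⁻¹ - I) atTop (𝓝 (-I)) := by
    simpa using (tendsto_inv_atTop_zero.ofReal).sub_const I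
  have hcont : ContinuousAt (· ^ s) (-I) :=
    continuousAt_cpow_const (mem_slitPlane_iff.mpr (Or.inr (by simp)))
  refine (hcont.tendsto.comp hinv).congr' ?_
  filter_upwards [eventually_gt_atTop 0] with u hu
  have hu' : (u : ℂ) ≠ 0 := ofReal_ne_zero.mpr hu.ne'
  have hne : (u : ℂ)⁻¹ - I ≠ 0 := fun h => by simpa using congrArg im h
  rw [Function.comp_apply, show 1 - u * I = (u : ℂ) * ((u : ℂ)⁻¹ - I) by field_simp,
    ofReal_mul_cpow hu hne,
    mul_div_cancel_left₀ _ (by rw [Ne, cpow_eq_zero_iff]; exact fun h => hu' h.1)]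

lemma neg_I_cpow (s : ℂ) : (-I) ^ s = exp (-(π / 2) * I * s) := by
  rw [cpow_def_of_ne_zero (neg_ne_zero.mpr I_ne_zero), log_neg_I]

end Complex

lemma not_integrable_of_rpow_isBigO {E : Type*} [NormedAddCommGroup E] {f : ℝ → E} {p : ℝ}
    (hp : -1 ≤ p) (h : (fun u : ℝ => u ^ p) =O[atTop] f) : ¬ Integrable f := fun hf =>
  (integrableAtFilter_rpow_atTop_iff.mp (h.integrableAtFilter
    (measurable_id.pow_const p).stronglyMeasurable.stronglyMeasurableAtFilter
    (hf.integrableAtFilter atTop))).not_ge hp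

lemma not_integrable_one_add_rpow_mul_norm {F : ℝ → ℂ} {c : ℂ} (hc : c ≠ 0) {p β : ℝ}
    (hpβ : -1 ≤ β + p) (hF : F ~[atTop] fun u => c * ((u ^ p : ℝ) : ℂ)) :
    ¬ Integrable (fun u : ℝ => (1 + |u| ^ β) * ‖F u‖) := by
  have hβ : (fun u : ℝ => u ^ β) =O[atTop] fun u => 1 + |u| ^ β := by
    refine IsBigO.of_norm_eventuallyLE ?_
    filter_upwards [eventually_ge_atTop 0] with u hu
    rw [norm_of_nonneg (by positivity), abs_of_nonneg hu]
    linarith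
  have hp : (fun u : ℝ => u ^ p) =O[atTop] fun u => ‖F u‖ :=
    ((isBigO_of_le _ fun u => by simp).const_mul_right hc).trans
      hF.isBigO_symm.norm_right
  refine not_integrable_of_rpow_isBigO hpβ ((hβ.mul hp).congr' ?_ (by rfl))
  filter_upwards [eventually_gt_atTop 0] with u hu
  rw [rpow_add hu]

noncomputable def temperedStableDensity (γ x : ℝ) : ℝ :=
  if 0 < x then (2 ^ γ * γ / Gamma (1 - γ)) * x ^ (-(γ + 1)) * exp (-x / 2) else 0

lemma sq_mul_temperedStableDensity {γ : ℝ} (hγ : γ < 1) (x : ℝ) :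
    x ^ 2 * temperedStableDensity γ x = 4 * γ * (1 - γ) * gammaPDFReal (2 - γ) (1 / 2) x := by
  rcases lt_trichotomy x 0 with hx | rfl | hx
  · simp [temperedStableDensity, gammaPDFReal, hx.not_gt, hx.not_ge]
  · simp [temperedStableDensity, gammaPDFReal, zero_rpow (by linarith : 2 - γ - 1 ≠ 0)]
  have hΓ : Gamma (2 - γ) = (1 - γ) * Gamma (1 - γ) := by
    rw [show 2 - γ = (1 - γ) + 1 by ring, Gamma_add_one (by linarith)]
  have hpow : x ^ 2 * x ^ (-(γ + 1)) = x ^ (2 - γ - 1) := by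
    rw [← rpow_natCast, ← rpow_add hx]; norm_num; ring_nf
  have h2 : (1 / 2 : ℝ) ^ (2 - γ) * 4 = 2 ^ γ := by
    rw [one_div, inv_rpow (by norm_num), rpow_sub two_pos]; norm_num
  have h1 : 1 - γ ≠ 0 := by linarith
  rw [temperedStableDensity, gammaPDFReal, if_pos hx, if_pos hx.le, hΓ, ← h2, ← hpow]
  field_simp

lemma integral_exp_mul_sq_mul_temperedStableDensity {γ : ℝ} (hγ : γ < 1) (u : ℝ) :
    ∫ x : ℝ, Complex.exp (Complex.I * u * x) * ↑(x ^ 2 * temperedStableDensity γ x) =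
      (4 * γ * (1 - γ) : ℝ) * (1 - (2 * u : ℝ) * Complex.I) ^ ((γ : ℂ) - 2) := by
  have hchar := charFun_gammaMeasure (a := 2 - γ) (r := 1 / 2) (by linarith) (by norm_num) u
  rw [charFun_apply_real, integral_gammaMeasure (by linarith) (by norm_num)] at hchar
  have hpt (x : ℝ) :
      Complex.exp (Complex.I * u * x) * ↑(x ^ 2 * temperedStableDensity γ x) =
        (4 * γ * (1 - γ) : ℝ) *
          (gammaPDFReal (2 - γ) (1 / 2) x • Complex.exp (u * x * Complex.I)) := by
    rw [sq_mul_temperedStableDensity hγ, Complex.real_smul]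
    push_cast
    ring_nf
  rw [integral_congr_ae (ae_of_all _ hpt), integral_const_mul, hchar]
  push_cast
  ring_nf

lemma tendsto_integral_exp_mul_sq_mul_temperedStableDensity_div {γ : ℝ} (hγ0 : γ ≠ 0)
    (hγ1 : γ < 1) :
    Tendsto (fun u : ℝ =>
        (∫ x : ℝ, Complex.exp (Complex.I * u * x) * ↑(x ^ 2 * temperedStableDensity γ x)) /
          (((2 : ℝ) ^ γ * γ * (1 - γ) : ℝ) * Complex.exp (Complex.I * π * (1 - γ / 2)) *
            ((u ^ (γ - 2) : ℝ) : ℂ)))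
      atTop (𝓝 1) := by
  simp_rw [integral_exp_mul_sq_mul_temperedStableDensity hγ1]
  set s : ℂ := (γ : ℂ) - 2
  have hI : (-Complex.I) ^ s ≠ 0 := by rw [Complex.neg_I_cpow]; exact Complex.exp_ne_zero _
  have hlim := ((Complex.tendsto_one_sub_mul_I_cpow_div_cpow s).comp
    (tendsto_id.const_mul_atTop two_pos)).div_const ((-Complex.I) ^ s)
  rw [div_self hI] at hlim
  refine hlim.congr' ?_
  filter_upwards [eventually_gt_atTop 0] with u hu
  have hexp : Complex.exp (Complex.I * π * (1 - γ / 2)) = (-Complex.I) ^ s := by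
    rw [Complex.neg_I_cpow]; congr 1; ring
  have hu_pow : ((u ^ (γ - 2) : ℝ) : ℂ) = (u : ℂ) ^ s := by
    rw [Complex.ofReal_cpow hu.le]; push_cast; rfl
  have h2u_pow : ((2 * u : ℝ) : ℂ) ^ s = ((2 ^ (γ - 2) : ℝ) : ℂ) * (u : ℂ) ^ s := by
    rw [Complex.ofReal_mul, Complex.mul_cpow_ofReal_nonneg two_pos.le hu.le,
      Complex.ofReal_cpow two_pos.le]
    push_cast; rfl
  have h4 : (2 : ℝ) ^ γ = 4 * 2 ^ (γ - 2) := by rw [rpow_sub two_pos]; norm_num; field_simp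
  have hγ : (γ : ℂ) ≠ 0 := Complex.ofReal_ne_zero.mpr hγ0
  have h1γ : (1 : ℂ) - γ ≠ 0 := by exact_mod_cast (sub_pos.mpr hγ1).ne'
  have h2 : ((2 ^ (γ - 2) : ℝ) : ℂ) ≠ 0 := Complex.ofReal_ne_zero.mpr (by positivity)
  simp only [Function.comp_apply, id]
  rw [hexp, hu_pow, h2u_pow, h4]
  push_cast
  field_simp

/-- For the tempered stable density
`ν(x) = (2^γ γ/Γ(1-γ)) x^{-(γ+1)} e^{-x/2} 1_{x>0}` with `γ ∈ (0,1)`, the Fourier transform of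
`x²ν(x)` satisfies `F[x²ν](u) ~ 2^γ γ(1-γ) e^{iπ(1-γ/2)} u^{-2+γ}` as `u → +∞`. In particular,
`∫ (1+|u|^β)|F[x²ν](u)| du = ∞` whenever `β > 1-γ`. -/
theorem tempered_stable_fourier_asymptotics
    (γ : ℝ) (hγ0 : 0 < γ) (hγ1 : γ < 1)
    (ν : ℝ → ℝ)
    (hν : ∀ x : ℝ, ν x = if 0 < x then
      ((2 : ℝ) ^ γ * γ / Real.Gamma (1 - γ)) * x ^ (-(γ + 1)) * Real.exp (-x / 2) else 0)
    (F : ℝ → ℂ)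
    (hF : ∀ u : ℝ, F u = ∫ x : ℝ, Complex.exp (Complex.I * u * x) * ((x ^ 2 * ν x : ℝ) : ℂ)) :
    Tendsto (fun u : ℝ =>
        F u / (((2 : ℝ) ^ γ * γ * (1 - γ) : ℝ) *
          Complex.exp (Complex.I * (Real.pi : ℂ) * (1 - γ / 2)) * ((u ^ (γ - 2) : ℝ) : ℂ)))
      atTop (nhds 1) ∧
    ∀ β : ℝ, 1 - γ < β → ¬ Integrable (fun u : ℝ => (1 + |u| ^ β) * ‖F u‖) := by
  obtain rfl : ν = temperedStableDensity γ := funext hν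
  have hlim := tendsto_integral_exp_mul_sq_mul_temperedStableDensity_div hγ0.ne' hγ1
  simp_rw [← hF] at hlim
  have hK : (((2 : ℝ) ^ γ * γ * (1 - γ) : ℝ) : ℂ) *
      Complex.exp (Complex.I * (Real.pi : ℂ) * (1 - γ / 2)) ≠ 0 :=
    mul_ne_zero (Complex.ofReal_ne_zero.mpr (by have := sub_pos.mpr hγ1; positivity))
      (Complex.exp_ne_zero _)
  exact ⟨hlim, fun β hβ => not_integrable_one_add_rpow_mul_norm hK (by linarith)
    (isEquivalent_of_tendsto_one hlim)⟩
end

section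
/- Let ψ̃ be the characteristic exponent of a Lévy process such that exp(ψ̃(u)) is a characteristic function of an infinitely divisible distribution, and set ψ(u) = log(1/(1-ψ̃(u))) (compound exponential). If L̃_Δ is any completely monotone function with L̃_Δ(0)=1 and we define L_Δ(z) = L̃_Δ(e^z - 1), then L_Δ(-ψ(u)) = L̃_Δ(-ψ̃(u)) for all u ∈ ℝ. -/
/-! The time change `z ↦ e^z - 1` exactly undoes the compound exponential transform:
`exp (-log (1 / (1 - w))) = 1 - w` as soon as `1 - w ≠ 0`, since `exp ∘ log` is the identity
on `ℂ ∖ {0}` for the principal branch. -/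

theorem Complex.exp_neg_log_one_div_one_sub_sub_one {w : ℂ} (hw : w ≠ 1) :
    Complex.exp (-Complex.log (1 / (1 - w))) - 1 = -w := by
  have hne : (1 : ℂ) / (1 - w) ≠ 0 := one_div_ne_zero (sub_ne_zero.mpr hw.symm)
  rw [Complex.exp_neg, Complex.exp_log hne, one_div, inv_inv]
  ring

theorem ne_one_of_norm_lt_one {R : Type*} [SeminormedRing R] [NormOneClass R] {w : R}
    (hw : ‖w‖ < 1) : w ≠ 1 := by
  rintro rfl
  simp at hw

theorem compound_exponential_nonidentifiability_general
    (ψt : ℝ → ℂ)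
    (habs : ∀ u, ‖ψt u‖ < 1)
    (Lt : ℂ → ℂ)
    (ψ : ℝ → ℂ) (hψ : ∀ u, ψ u = Complex.log (1 / (1 - ψt u)))
    (LΔ : ℂ → ℂ) (hLΔ : ∀ z : ℂ, LΔ z = Lt (Complex.exp z - 1)) :
    ∀ u : ℝ, LΔ (-ψ u) = Lt (-ψt u) := by
  intro u
  rw [hLΔ, hψ, Complex.exp_neg_log_one_div_one_sub_sub_one (ne_one_of_norm_lt_one (habs u))]

/-- Let `ψ̃` be the characteristic exponent of a Lévy process such that
`exp(ψ̃(u))` is the characteristic function of an infinitely divisible distribution, with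
`Re ψ̃ ≤ 0` and `|ψ̃(u)| < 1`, and set `ψ(u) = log(1/(1-ψ̃(u)))` (compound exponential). If
`L̃Δ` is any completely monotone function with `L̃Δ(0)=1` and we define `LΔ(z) = L̃Δ(e^z - 1)`,
then `LΔ(-ψ(u)) = L̃Δ(-ψ̃(u))` for all `u ∈ ℝ`. -/
theorem compound_exponential_nonidentifiability
    (ψt : ℝ → ℂ)
    (hre : ∀ u, (ψt u).re ≤ 0) (habs : ∀ u, ‖ψt u‖ < 1)
    (Lt : ℂ → ℂ)
    -- complete monotonicity of `L̃Δ` (on the nonnegative half-line)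
    (hcm : ∀ (n : ℕ) (x : ℝ), 0 ≤ x →
      0 ≤ (-1 : ℝ) ^ n * iteratedDeriv n (fun t : ℝ => (Lt (t : ℂ)).re) x)
    (hL0 : Lt 0 = 1)
    (ψ : ℝ → ℂ) (hψ : ∀ u, ψ u = Complex.log (1 / (1 - ψt u)))
    (LΔ : ℂ → ℂ) (hLΔ : ∀ z : ℂ, LΔ z = Lt (Complex.exp z - 1)) :
    ∀ u : ℝ, LΔ (-ψ u) = Lt (-ψt u) :=
  compound_exponential_nonidentifiability_general ψt habs Lt ψ hψ LΔ hLΔ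
end

section
/- Let f̄: ℝ → ℝ be bounded by C, m times differentiable on (x₀ - δ, x₀ + δ) with derivatives bounded by D, and let K: ℝ → ℝ satisfy ∫K = 1, ∫z^k K(z)dz = 0 for 1 ≤ k ≤ m, and ∫|z|^m |K(z)| dz < ∞. Then for all h ∈ (0, δ], |∫_ℝ f̄(x₀ + hv) K(v) dv − f̄(x₀)| ≤ C' h^s for every 1 ≤ s ≤ m, with a constant C' depending only on C, D, δ, s and ∫|z|^m|K(z)|dz. -/
/-!
Write `f (x₀ + u) = T u + R u` with `T` the Taylor polynomial of degree `m - 1` of `f` at `x₀`.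
Since `K` has mass one and vanishing moments of orders `1, …, m - 1`, `∫ T (h v) K v dv = f x₀`,
so the bias is `∫ R (h v) K v dv`. For `|u| < δ` the Lagrange remainder gives
`|R u| ≤ D |u| ^ m / m!`; for `|u| ≥ δ` both the bounded `f` and the polynomial `T` of degree
`< m` are `O(|u| ^ m)`. Hence `|R u| ≤ M |u| ^ m` everywhere, the bias is at most
`M h ^ m ∫ |v| ^ m |K v| dv`, and `h ^ m ≤ δ ^ (m - s) h ^ s` for `h ≤ δ`.
-/

open MeasureTheory Set Nat

theorem pow_le_max_one_inv_pow_mul_pow {δ r : ℝ} (hδ : 0 < δ) (hr : δ ≤ r) {k m : ℕ}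
    (hkm : k ≤ m) : r ^ k ≤ max 1 δ⁻¹ ^ m * r ^ m := by
  have hr0 : 0 < r := hδ.trans_le hr
  have hinv : r⁻¹ ≤ max 1 δ⁻¹ := (inv_anti₀ hδ hr).trans (le_max_right _ _)
  calc r ^ k = r⁻¹ ^ (m - k) * r ^ m := by
        rw [inv_pow, ← div_eq_inv_mul, eq_div_iff (by positivity), ← pow_add,
          Nat.add_sub_cancel' hkm]
    _ ≤ max 1 δ⁻¹ ^ (m - k) * r ^ m := by gcongr
    _ ≤ max 1 δ⁻¹ ^ m * r ^ m := by
        gcongr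
        · exact le_max_left _ _
        · omega

section Taylor

variable {f : ℝ → ℝ} {n : ℕ} {s t : Set ℝ} {x₀ x : ℝ}

theorem iteratedDerivWithin_subset (st : s ⊆ t) (hs : UniqueDiffOn ℝ s) (ht : UniqueDiffOn ℝ t)
    (hf : ContDiffOn ℝ n f t) (hx : x ∈ s) :
    iteratedDerivWithin n f s x = iteratedDerivWithin n f t x := by
  simp only [iteratedDerivWithin, iteratedFDerivWithin_subset st hs ht hf hx]

theorem taylorWithinEval_subset (st : s ⊆ t) (hs : UniqueDiffOn ℝ s) (ht : UniqueDiffOn ℝ t)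
    (hf : ContDiffOn ℝ n f t) (hx₀ : x₀ ∈ s) :
    taylorWithinEval f n s x₀ x = taylorWithinEval f n t x₀ x := by
  simp only [taylor_within_apply]
  refine Finset.sum_congr rfl fun k hk => ?_
  have hkn : (k : WithTop ℕ∞) ≤ n := by exact_mod_cast Finset.mem_range_succ_iff.mp hk
  rw [iteratedDerivWithin_subset st hs ht (hf.of_le hkn) hx₀]

theorem abs_sub_taylorWithinEval_le [s.OrdConnected] (hs : UniqueDiffOn ℝ s) {D : ℝ}
    (hf : ContDiffOn ℝ (n + 1) f s) (hD : ∀ y ∈ s, |iteratedDerivWithin (n + 1) f s y| ≤ D)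
    (hx₀ : x₀ ∈ s) (hx : x ∈ s) :
    |f x - taylorWithinEval f n s x₀ x| ≤ D * |x - x₀| ^ (n + 1) / (n + 1)! := by
  rcases eq_or_ne x₀ x with rfl | hne
  · simp [taylorWithinEval_self]
  have hsub : uIcc x₀ x ⊆ s := ‹s.OrdConnected›.uIcc_subset hx₀ hx
  have hI : UniqueDiffOn ℝ (uIcc x₀ x) := uniqueDiffOn_uIcc hne
  have hfI : ContDiffOn ℝ (n + 1) f (uIcc x₀ x) := hf.mono hsub
  obtain ⟨y, hy, hrem⟩ := taylor_mean_remainder_lagrange hne hfI.of_succ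
    ((hfI.differentiableOn_iteratedDerivWithin (by exact_mod_cast n.lt_succ_self) hI).mono
      Ioo_subset_Icc_self)
  have hyI : y ∈ uIcc x₀ x := Ioo_subset_Icc_self hy
  rw [taylorWithinEval_subset hsub hI hs hf.of_succ left_mem_uIcc,
    iteratedDerivWithin_subset hsub hI hs hf hyI] at hrem
  rw [hrem, abs_div, abs_mul, abs_pow, Nat.abs_cast]
  gcongr
  exact hD y (hsub hyI)

theorem abs_taylorWithinEval_le {D δ : ℝ}
    (hD : ∀ k ≤ n, |iteratedDerivWithin k f s x₀| ≤ D) (hδ : 0 < δ) (hx : δ ≤ |x - x₀|) :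
    |taylorWithinEval f n s x₀ x| ≤ (n + 1) * D * max 1 δ⁻¹ ^ (n + 1) * |x - x₀| ^ (n + 1) := by
  have hD0 : 0 ≤ D := (abs_nonneg _).trans (hD 0 n.zero_le)
  rw [taylor_within_apply]
  refine (Finset.abs_sum_le_sum_abs _ _).trans ?_
  calc ∑ k ∈ Finset.range (n + 1), |((k ! : ℝ)⁻¹ * (x - x₀) ^ k) • iteratedDerivWithin k f s x₀|
      ≤ ∑ k ∈ Finset.range (n + 1), D * (max 1 δ⁻¹ ^ (n + 1) * |x - x₀| ^ (n + 1)) := by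
        refine Finset.sum_le_sum fun k hk => ?_
        have hkn := Finset.mem_range_succ_iff.mp hk
        have hfact : (k ! : ℝ)⁻¹ ≤ 1 := inv_le_one_of_one_le₀ (Nat.one_le_cast.mpr k.factorial_pos)
        rw [smul_eq_mul, abs_mul, abs_mul, abs_pow, abs_inv, Nat.abs_cast, mul_comm]
        calc |iteratedDerivWithin k f s x₀| * ((k ! : ℝ)⁻¹ * |x - x₀| ^ k)
            ≤ D * (1 * |x - x₀| ^ k) := by gcongr; exact hD k hkn
          _ ≤ D * (max 1 δ⁻¹ ^ (n + 1) * |x - x₀| ^ (n + 1)) := by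
            rw [one_mul]
            gcongr
            exact pow_le_max_one_inv_pow_mul_pow hδ hx (by omega)
    _ = (n + 1) * D * max 1 δ⁻¹ ^ (n + 1) * |x - x₀| ^ (n + 1) := by
        rw [Finset.sum_const, Finset.card_range, nsmul_eq_mul]; push_cast; ring

theorem exists_abs_sub_taylorWithinEval_le {C D δ : ℝ} (hδ : 0 < δ)
    (hfC : ∀ x, |f x| ≤ C) (hf : ContDiffOn ℝ (n + 1) f (Ioo (x₀ - δ) (x₀ + δ)))
    (hD : ∀ k ≤ n + 1, ∀ y ∈ Ioo (x₀ - δ) (x₀ + δ),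
      |iteratedDerivWithin k f (Ioo (x₀ - δ) (x₀ + δ)) y| ≤ D) :
    ∃ M, 0 ≤ M ∧ ∀ u, |f (x₀ + u) - taylorWithinEval f n (Ioo (x₀ - δ) (x₀ + δ)) x₀ (x₀ + u)|
      ≤ M * |u| ^ (n + 1) := by
  have hx₀ : x₀ ∈ Ioo (x₀ - δ) (x₀ + δ) := ⟨by linarith, by linarith⟩
  have hC0 : 0 ≤ C := (abs_nonneg _).trans (hfC x₀)
  have hD0 : 0 ≤ D := (abs_nonneg _).trans (hD 0 (Nat.zero_le _) x₀ hx₀)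
  set A := max 1 δ⁻¹ ^ (n + 1)
  refine ⟨D / (n + 1)! + C / δ ^ (n + 1) + (n + 1) * D * A, by positivity, fun u => ?_⟩
  have hpow : 0 ≤ |u| ^ (n + 1) := by positivity
  rcases lt_or_ge |u| δ with hu | hu
  · have hmem : x₀ + u ∈ Ioo (x₀ - δ) (x₀ + δ) := by
      obtain ⟨h₁, h₂⟩ := abs_lt.mp hu
      exact ⟨by linarith, by linarith⟩
    have hlocal := abs_sub_taylorWithinEval_le (uniqueDiffOn_Ioo _ _) hf (hD (n + 1) le_rfl)
      hx₀ hmem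
    rw [add_sub_cancel_left, mul_div_right_comm] at hlocal
    refine hlocal.trans ?_
    gcongr
    nlinarith [show 0 ≤ C / δ ^ (n + 1) by positivity, show 0 ≤ (n + 1) * D * A by positivity]
  · have hfar := abs_taylorWithinEval_le (f := f) (n := n) (s := Ioo (x₀ - δ) (x₀ + δ))
      (fun k hk => hD k (by omega) x₀ hx₀) hδ (x := x₀ + u)
      (by rwa [add_sub_cancel_left])
    rw [add_sub_cancel_left] at hfar
    have hfu : |f (x₀ + u)| ≤ C / δ ^ (n + 1) * |u| ^ (n + 1) := by
      rw [div_mul_eq_mul_div, le_div_iff₀ (by positivity)]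
      exact mul_le_mul (hfC _) (pow_le_pow_left₀ hδ.le hu _) (by positivity) hC0
    calc _ ≤ |f (x₀ + u)| + |taylorWithinEval f n (Ioo (x₀ - δ) (x₀ + δ)) x₀ (x₀ + u)| :=
          abs_sub _ _
      _ ≤ _ := by nlinarith [show 0 ≤ D / (n + 1)! by positivity]

theorem taylorWithinEval_add_mul (f : ℝ → ℝ) (n : ℕ) (s : Set ℝ) (x₀ h v : ℝ) :
    taylorWithinEval f n s x₀ (x₀ + h * v) =
      ∑ k ∈ Finset.range (n + 1), (k ! : ℝ)⁻¹ * h ^ k * iteratedDerivWithin k f s x₀ * v ^ k := by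
  rw [taylor_within_apply]
  refine Finset.sum_congr rfl fun k _ => ?_
  rw [add_sub_cancel_left, smul_eq_mul, mul_pow]
  ring

end Taylor

structure IsKernelOfOrder (K : ℝ → ℝ) (n : ℕ) : Prop where
  integrable : Integrable K
  integral_eq_one : ∫ z, K z = 1
  integrable_pow_mul : ∀ k, 1 ≤ k → k ≤ n → Integrable fun z => z ^ k * K z
  integral_pow_mul : ∀ k, 1 ≤ k → k ≤ n → ∫ z, z ^ k * K z = 0

namespace IsKernelOfOrder

variable {K : ℝ → ℝ} {n : ℕ}

theorem integrable_pow_mul_of_le (hK : IsKernelOfOrder K n) {k : ℕ} (hk : k ≤ n) :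
    Integrable fun z => z ^ k * K z := by
  rcases Nat.eq_zero_or_pos k with rfl | hk0
  · simpa using hK.integrable
  · exact hK.integrable_pow_mul k hk0 hk

theorem integrable_sum_mul_pow_mul (hK : IsKernelOfOrder K n) (c : ℕ → ℝ) :
    Integrable fun v => (∑ k ∈ Finset.range (n + 1), c k * v ^ k) * K v := by
  simp only [Finset.sum_mul, mul_assoc]
  exact integrable_finsetSum _ fun k hk =>
    (hK.integrable_pow_mul_of_le (Finset.mem_range_succ_iff.mp hk)).const_mul _

theorem integral_sum_mul_pow_mul (hK : IsKernelOfOrder K n) (c : ℕ → ℝ) :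
    ∫ v, (∑ k ∈ Finset.range (n + 1), c k * v ^ k) * K v = c 0 := by
  simp only [Finset.sum_mul, mul_assoc]
  rw [integral_finsetSum _ fun k hk =>
    (hK.integrable_pow_mul_of_le (Finset.mem_range_succ_iff.mp hk)).const_mul _,
    Finset.sum_eq_single_of_mem 0 (Finset.mem_range.mpr n.succ_pos)]
  · simp [integral_const_mul, hK.integral_eq_one]
  · intro k hk hk0
    rw [integral_const_mul, hK.integral_pow_mul k (Nat.one_le_iff_ne_zero.mpr hk0)
      (Finset.mem_range_succ_iff.mp hk), mul_zero]

theorem integral_comp_mul_sub_eq (hK : IsKernelOfOrder K n) {f : ℝ → ℝ} {C : ℝ}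
    (hfC : ∀ x, |f x| ≤ C) (hfmeas : Measurable f) (s : Set ℝ) (x₀ h : ℝ) :
    (∫ v, f (x₀ + h * v) * K v) - f x₀ =
      ∫ v, (f (x₀ + h * v) - taylorWithinEval f n s x₀ (x₀ + h * v)) * K v := by
  set c : ℕ → ℝ := fun k => (k ! : ℝ)⁻¹ * h ^ k * iteratedDerivWithin k f s x₀
  have hc0 : c 0 = f x₀ := by simp [c]
  have hfK : Integrable fun v => f (x₀ + h * v) * K v :=
    hK.integrable.bdd_mul (by fun_prop : Measurable fun v => f (x₀ + h * v)).aestronglyMeasurable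
      (ae_of_all _ fun v => hfC _)
  simp only [sub_mul, taylorWithinEval_add_mul]
  rw [integral_sub hfK (hK.integrable_sum_mul_pow_mul c), hK.integral_sum_mul_pow_mul c, hc0]

end IsKernelOfOrder

theorem abs_integral_comp_mul_mul_le {R K : ℝ → ℝ} {M h : ℝ} {m : ℕ}
    (hR : ∀ u, |R u| ≤ M * |u| ^ m) (hK : Integrable fun v => |v| ^ m * |K v|) (hh : 0 ≤ h) :
    |∫ v, R (h * v) * K v| ≤ M * h ^ m * ∫ v, |v| ^ m * |K v| := by
  rw [← Real.norm_eq_abs, ← integral_const_mul]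
  refine norm_integral_le_of_norm_le (hK.const_mul _) (ae_of_all _ fun v => ?_)
  calc ‖R (h * v) * K v‖ = |R (h * v)| * |K v| := by rw [Real.norm_eq_abs, abs_mul]
    _ ≤ M * |h * v| ^ m * |K v| := by gcongr; exact hR _
    _ = M * h ^ m * (|v| ^ m * |K v|) := by rw [abs_mul, abs_of_nonneg hh, mul_pow]; ring

theorem kernel_smoothing_bias_bound_general
    (f : ℝ → ℝ) (C D δ x₀ : ℝ) (hδ : 0 < δ)
    (m : ℕ)
    (hfbdd : ∀ x : ℝ, |f x| ≤ C)
    (hfmeas : Measurable f)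
    (hfsmooth : ContDiffOn ℝ m f (Set.Ioo (x₀ - δ) (x₀ + δ)))
    (hfderiv : ∀ k : ℕ, k ≤ m → ∀ x ∈ Set.Ioo (x₀ - δ) (x₀ + δ),
      |iteratedDerivWithin k f (Set.Ioo (x₀ - δ) (x₀ + δ)) x| ≤ D)
    (K : ℝ → ℝ)
    (hKint : Integrable K) (hK1 : ∫ z : ℝ, K z = 1)
    (hKmom : ∀ k : ℕ, 1 ≤ k → k ≤ m →
      Integrable (fun z : ℝ => z ^ k * K z) ∧ (∫ z : ℝ, z ^ k * K z) = 0)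
    (hKabs : Integrable (fun z : ℝ => |z| ^ m * |K z|)) :
    ∀ s : ℕ, 1 ≤ s → s ≤ m → ∃ C' : ℝ, 0 < C' ∧
      ∀ h : ℝ, 0 < h → h ≤ δ →
        |(∫ v : ℝ, f (x₀ + h * v) * K v) - f x₀| ≤ C' * h ^ s := by
  intro s hs hsm
  obtain ⟨n, rfl⟩ : ∃ n, m = n + 1 := ⟨m - 1, by omega⟩
  push_cast at hfsmooth
  obtain ⟨M, hM0, hM⟩ := exists_abs_sub_taylorWithinEval_le hδ hfbdd hfsmooth hfderiv
  set I := ∫ v, |v| ^ (n + 1) * |K v|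
  have hI0 : 0 ≤ I := integral_nonneg fun v => by positivity
  refine ⟨M * I * δ ^ (n + 1 - s) + 1, by positivity, fun h hh hhδ => ?_⟩
  have hK : IsKernelOfOrder K n := ⟨hKint, hK1, fun k hk hkn => (hKmom k hk (by omega)).1,
    fun k hk hkn => (hKmom k hk (by omega)).2⟩
  rw [hK.integral_comp_mul_sub_eq hfbdd hfmeas (Ioo (x₀ - δ) (x₀ + δ)) x₀ h]
  calc _ ≤ M * h ^ (n + 1) * I := abs_integral_comp_mul_mul_le hM hKabs hh.le
    _ = M * I * (h ^ (n + 1 - s) * h ^ s) := by rw [← pow_add, Nat.sub_add_cancel hsm]; ring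
    _ ≤ M * I * (δ ^ (n + 1 - s) * h ^ s) := by gcongr
    _ ≤ (M * I * δ ^ (n + 1 - s) + 1) * h ^ s := by nlinarith [pow_pos hh s]

/-- Let `f̄ : ℝ → ℝ` be bounded by `C`, `m` times differentiable on
`(x₀ - δ, x₀ + δ)` with derivatives bounded by `D`, and let `K : ℝ → ℝ` satisfy `∫K = 1`,
`∫ z^k K(z) dz = 0` for `1 ≤ k ≤ m`, and `∫ |z|^m |K(z)| dz < ∞`. Then for every `1 ≤ s ≤ m`
there is a constant `C'` (depending only on `C`, `D`, `δ`, `s` and `∫|z|^m|K(z)|dz`) such that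
for all `h ∈ (0, δ]`, `|∫_ℝ f̄(x₀ + hv) K(v) dv − f̄(x₀)| ≤ C' h^s`. -/
theorem kernel_smoothing_bias_bound
    (f : ℝ → ℝ) (C D δ x₀ : ℝ) (hC : 0 < C) (hD : 0 < D) (hδ : 0 < δ)
    (m : ℕ) (hm : 1 ≤ m)
    (hfbdd : ∀ x : ℝ, |f x| ≤ C)
    (hfmeas : Measurable f)
    (hfsmooth : ContDiffOn ℝ m f (Set.Ioo (x₀ - δ) (x₀ + δ)))
    (hfderiv : ∀ k : ℕ, k ≤ m → ∀ x ∈ Set.Ioo (x₀ - δ) (x₀ + δ),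
      |iteratedDerivWithin k f (Set.Ioo (x₀ - δ) (x₀ + δ)) x| ≤ D)
    (K : ℝ → ℝ)
    (hKint : Integrable K) (hK1 : ∫ z : ℝ, K z = 1)
    (hKmom : ∀ k : ℕ, 1 ≤ k → k ≤ m →
      Integrable (fun z : ℝ => z ^ k * K z) ∧ (∫ z : ℝ, z ^ k * K z) = 0)
    (hKabs : Integrable (fun z : ℝ => |z| ^ m * |K z|)) :
    ∀ s : ℕ, 1 ≤ s → s ≤ m → ∃ C' : ℝ, 0 < C' ∧
      ∀ h : ℝ, 0 < h → h ≤ δ →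
        |(∫ v : ℝ, f (x₀ + h * v) * K v) - f x₀| ≤ C' * h ^ s :=
  kernel_smoothing_bias_bound_general f C D δ x₀ hδ m hfbdd hfmeas hfsmooth hfderiv K hKint hK1
    hKmom hKabs
end
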